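/- arXiv:2402.01621 — 6 statements merged into one kernel-verified Lean document; each statement's English description precedes it below -/
import Mathlib

section
/- Let d ≥ 1, let f : ℝ^d → ℝ be differentiable and L-gradient Lipschitz with L > 0, let x ∈ ℝ^d, let α ≥ 0, and let s be a Rademacher random vector in ℝ^d. Then E[min(f(x + αs), f(x − αs))] ≤ f(x) − (α/√2)‖∇f(x)‖ + (L α² d)/2. -/
/-!
Along `±s`, the descent lemma for an `L`-smooth `f` bounds the better of the two trial points
by `f x - α |⟪∇f x, s⟫| + L α² ‖s‖² / 2`, and `‖s‖² = d`. What remains is Szarek's sharp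
Khintchine inequality `E |⟪g, s⟫| ≥ ‖g‖ / √2`, proved by the Latała–Oleszkiewicz argument:
`r s = |⟪g, s⟫|` is even and satisfies `∑ i, r (s with its i-th sign flipped) ≥ (d - 2) r s`.
The flip sum acts on the Walsh character `A` with eigenvalue `d - 2|A|`, so this inequality
gives `∑_{|A| ≥ 2} r̂(A)² ≤ r̂(∅)²`, while evenness kills the level-one coefficients; hence
`E r² ≤ 2 (E r)²`, and `E r² = ‖g‖²`.
-/

/-- The vector in `ℝ^d` with `+1` in coordinates where `e` is `true`
and `-1` where `e` is `false`; a Rademacher random vector is uniform over these. -/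
noncomputable def signVec {d : ℕ} (e : Fin d → Bool) : EuclideanSpace ℝ (Fin d) :=
  WithLp.toLp 2 (fun i => if e i then 1 else -1)

open Finset
open scoped InnerProductSpace

section Walsh

variable {ι : Type*}

noncomputable def boolSign (b : Bool) : ℝ := if b then 1 else -1

lemma boolSign_mul_self (b : Bool) : boolSign b * boolSign b = 1 := by
  cases b <;> simp [boolSign]

lemma boolSign_not (b : Bool) : boolSign (!b) = -boolSign b := by
  cases b <;> simp [boolSign]

lemma one_add_boolSign_mul_boolSign (a b : Bool) :
    1 + boolSign a * boolSign b = if a = b then 2 else 0 := by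
  cases a <;> cases b <;> norm_num [boolSign]

noncomputable def walsh (A : Finset ι) (e : ι → Bool) : ℝ := ∏ i ∈ A, boolSign (e i)

lemma walsh_empty (e : ι → Bool) : walsh ∅ e = 1 := prod_empty

lemma walsh_singleton (i : ι) (e : ι → Bool) : walsh {i} e = boolSign (e i) :=
  prod_singleton _ _

lemma walsh_mul_self (A : Finset ι) (e : ι → Bool) : walsh A e * walsh A e = 1 := by
  simp only [walsh, ← prod_mul_distrib, boolSign_mul_self, prod_const_one]

section Flip

variable [DecidableEq ι]

def flipAt (i : ι) (e : ι → Bool) : ι → Bool := Function.update e i (!e i)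

lemma flipAt_apply (i j : ι) (e : ι → Bool) :
    flipAt i e j = if j = i then !e j else e j := by
  by_cases h : j = i <;> simp [flipAt, h]

lemma flipAt_involutive (i : ι) : Function.Involutive (flipAt i) := by
  intro e
  ext j
  by_cases h : j = i <;> simp [flipAt_apply, h]

lemma walsh_flipAt (A : Finset ι) (i : ι) (e : ι → Bool) :
    walsh A (flipAt i e) = (if i ∈ A then -1 else 1) * walsh A e := by
  split_ifs with hi
  · rw [walsh, walsh, ← mul_prod_erase A _ hi, ← mul_prod_erase A _ hi, flipAt_apply,
      if_pos rfl, boolSign_not, neg_one_mul, neg_mul]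
    congr 2
    refine prod_congr rfl fun j hj => ?_
    rw [flipAt_apply, if_neg (ne_of_mem_erase hj)]
  · rw [one_mul]
    refine prod_congr rfl fun j hj => ?_
    rw [flipAt_apply, if_neg (ne_of_mem_of_not_mem hj hi)]

end Flip

variable [Fintype ι]

lemma sum_walsh_mul_walsh_dual (e e' : ι → Bool) :
    ∑ A, walsh A e * walsh A e' = if e = e' then (2 : ℝ) ^ Fintype.card ι else 0 := by
  simp only [walsh, ← prod_mul_distrib]
  rw [← powerset_univ, ← prod_one_add,
    prod_congr rfl fun i _ => one_add_boolSign_mul_boolSign _ _, prod_ite_zero]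
  simp [funext_iff]

variable [DecidableEq ι]

noncomputable def walshCoeff (r : (ι → Bool) → ℝ) (A : Finset ι) : ℝ := ∑ e, r e * walsh A e

lemma walshCoeff_empty (r : (ι → Bool) → ℝ) : walshCoeff r ∅ = ∑ e, r e := by
  simp [walshCoeff, walsh_empty]

lemma sum_walshCoeff_mul_walshCoeff (r g : (ι → Bool) → ℝ) :
    ∑ A, walshCoeff r A * walshCoeff g A = 2 ^ Fintype.card ι * ∑ e, r e * g e := by
  calc ∑ A, walshCoeff r A * walshCoeff g A
      = ∑ e, ∑ e', r e * g e' * ∑ A, walsh A e * walsh A e' := by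
        simp only [walshCoeff, sum_mul_sum]
        simp only [mul_sum]
        rw [sum_comm]
        refine sum_congr rfl fun e _ => ?_
        rw [sum_comm]
        exact sum_congr rfl fun e' _ => sum_congr rfl fun A _ => by ring
    _ = 2 ^ Fintype.card ι * ∑ e, r e * g e := by
        simp only [sum_walsh_mul_walsh_dual, mul_ite, mul_zero, sum_ite_eq, mem_univ, if_true,
          mul_sum]
        exact sum_congr rfl fun e _ => by ring

lemma sum_comp_flipAt (i : ι) (F : (ι → Bool) → ℝ) :
    ∑ e, F (flipAt i e) = ∑ e, F e :=
  Equiv.sum_comp (flipAt_involutive i).toPerm F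

lemma sum_walsh_mul_walsh (A B : Finset ι) :
    ∑ e, walsh A e * walsh B e = if A = B then (2 : ℝ) ^ Fintype.card ι else 0 := by
  split_ifs with hAB
  · subst hAB
    simp [walsh_mul_self]
  · obtain ⟨i, hi⟩ : ∃ i, ¬(i ∈ A ↔ i ∈ B) := by
      by_contra! h
      exact hAB (Finset.ext h)
    have hsign : ((if i ∈ A then -1 else 1) * (if i ∈ B then -1 else 1) : ℝ) = -1 := by
      by_cases hA : i ∈ A <;> by_cases hB : i ∈ B <;> simp_all
    have := sum_comp_flipAt i (fun e => walsh A e * walsh B e)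
    simp only [walsh_flipAt, mul_mul_mul_comm _ (walsh A _), hsign, neg_one_mul,
      sum_neg_distrib] at this
    linarith

lemma walshCoeff_comp_flipAt (r : (ι → Bool) → ℝ) (i : ι) (A : Finset ι) :
    walshCoeff (fun e => r (flipAt i e)) A = (if i ∈ A then -1 else 1) * walshCoeff r A := by
  rw [walshCoeff, ← sum_comp_flipAt i, walshCoeff, mul_sum]
  refine sum_congr rfl fun e _ => ?_
  rw [flipAt_involutive i e, walsh_flipAt]
  ring

lemma walshCoeff_singleton_eq_zero (r : (ι → Bool) → ℝ)
    (heven : ∀ e, r (fun j => !e j) = r e) (i : ι) : walshCoeff r {i} = 0 := by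
  have hinv : Function.Involutive fun (e : ι → Bool) j => !e j :=
    fun e => funext fun j => Bool.not_not (e j)
  have := Equiv.sum_comp hinv.toPerm (fun e => r e * walsh {i} e)
  simp only [Function.Involutive.coe_toPerm, heven, walsh_singleton, boolSign_not, mul_neg,
    sum_neg_distrib] at this
  rw [walshCoeff]
  simp only [walsh_singleton]
  linarith

lemma sum_ite_mem_neg_one_one (A : Finset ι) :
    ∑ i, (if i ∈ A then (-1 : ℝ) else 1) = Fintype.card ι - 2 * #A := by
  rw [sum_ite, sum_const, sum_const, filter_mem_eq_inter, univ_inter, filter_not,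
    filter_mem_eq_inter, univ_inter, ← compl_eq_univ_sdiff, card_compl]
  simp only [smul_neg, nsmul_eq_mul, mul_one, card_le_univ, Nat.cast_sub]
  ring

lemma sum_sum_mul_comp_flipAt (r : (ι → Bool) → ℝ) :
    2 ^ Fintype.card ι * ∑ i, ∑ e, r e * r (flipAt i e)
      = ∑ A, (Fintype.card ι - 2 * #A) * walshCoeff r A ^ 2 := by
  have hflip : ∀ i, 2 ^ Fintype.card ι * ∑ e, r e * r (flipAt i e)
      = ∑ A, (if i ∈ A then -1 else 1) * walshCoeff r A ^ 2 := fun i => by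
    rw [← sum_walshCoeff_mul_walshCoeff]
    exact sum_congr rfl fun A _ => by rw [walshCoeff_comp_flipAt]; ring
  rw [mul_sum, sum_congr rfl fun i _ => hflip i, sum_comm]
  refine sum_congr rfl fun A _ => ?_
  rw [← sum_ite_mem_neg_one_one, sum_mul]

lemma two_pow_mul_sum_sq_le_two_mul_sq_sum (r : (ι → Bool) → ℝ) (hpos : ∀ e, 0 ≤ r e)
    (heven : ∀ e, r (fun j => !e j) = r e)
    (hflip : ∀ e, (Fintype.card ι - 2) * r e ≤ ∑ i, r (flipAt i e)) :
    2 ^ Fintype.card ι * ∑ e, r e ^ 2 ≤ 2 * (∑ e, r e) ^ 2 := by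
  set n : ℝ := (Fintype.card ι : ℝ)
  set c := walshCoeff r
  have hparseval : ∑ A, c A ^ 2 = 2 ^ Fintype.card ι * ∑ e, r e ^ 2 := by
    simpa only [sq] using sum_walshCoeff_mul_walshCoeff r r
  have hflip_sum : (n - 2) * ∑ e, r e ^ 2 ≤ ∑ i, ∑ e, r e * r (flipAt i e) :=
    calc (n - 2) * ∑ e, r e ^ 2 = ∑ e, r e * ((n - 2) * r e) := by
          rw [mul_sum]; exact sum_congr rfl fun e _ => by ring
      _ ≤ ∑ e, r e * ∑ i, r (flipAt i e) :=
          sum_le_sum fun e _ => mul_le_mul_of_nonneg_left (hflip e) (hpos e)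
      _ = ∑ i, ∑ e, r e * r (flipAt i e) := by simp only [mul_sum]; exact sum_comm
  have hlower : (n - 2) * ∑ A, c A ^ 2 ≤ ∑ A, (n - 2 * #A) * c A ^ 2 := by
    rw [hparseval, ← sum_sum_mul_comp_flipAt, mul_left_comm]
    exact mul_le_mul_of_nonneg_left hflip_sum (by positivity)
  have hupper_term : ∀ A : Finset ι,
      (n - 2 * #A) * c A ^ 2 + 2 * c A ^ 2
        ≤ (n - 2) * c A ^ 2 + if A = ∅ then 4 * c A ^ 2 else 0 := by
    intro A
    by_cases hA0 : A = ∅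
    · rw [if_pos hA0, hA0, card_empty, Nat.cast_zero]
      linarith
    rw [if_neg hA0]
    obtain hA1 | hA2 : #A = 1 ∨ 2 ≤ #A := by
      have := card_pos.2 (nonempty_iff_ne_empty.2 hA0)
      omega
    · obtain ⟨i, rfl⟩ := card_eq_one.1 hA1
      simp [c, walshCoeff_singleton_eq_zero r heven i]
    · have : (2 : ℝ) ≤ #A := by exact_mod_cast hA2
      nlinarith [sq_nonneg (c A)]
  have hupper := sum_le_sum fun A (_ : A ∈ univ) => hupper_term A
  rw [sum_add_distrib, sum_add_distrib, sum_ite_eq', if_pos (mem_univ _), ← mul_sum,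
    ← mul_sum] at hupper
  rw [← hparseval, ← walshCoeff_empty]
  linarith

end Walsh

section Rademacher

variable {d : ℕ}

lemma signVec_apply (e : Fin d → Bool) (j : Fin d) : signVec e j = boolSign (e j) := rfl

lemma inner_signVec (g : EuclideanSpace ℝ (Fin d)) (e : Fin d → Bool) :
    ⟪g, signVec e⟫_ℝ = ∑ j, g j * walsh {j} e := by
  simp [PiLp.inner_apply, signVec_apply, walsh_singleton, mul_comm]

lemma norm_signVec_sq (e : Fin d → Bool) : ‖signVec e‖ ^ 2 = d := by
  simp [EuclideanSpace.norm_sq_eq, signVec_apply, boolSign]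

lemma sum_inner_signVec_sq (g : EuclideanSpace ℝ (Fin d)) :
    ∑ e, ⟪g, signVec e⟫_ℝ ^ 2 = 2 ^ d * ‖g‖ ^ 2 := by
  calc ∑ e, ⟪g, signVec e⟫_ℝ ^ 2
      = ∑ j, ∑ k, g j * g k * ∑ e, walsh {j} e * walsh {k} e := by
        simp only [inner_signVec, sq, sum_mul_sum]
        simp only [mul_sum]
        rw [sum_comm]
        refine sum_congr rfl fun j _ => ?_
        rw [sum_comm]
        exact sum_congr rfl fun k _ => sum_congr rfl fun e _ => by ring
    _ = 2 ^ d * ‖g‖ ^ 2 := by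
        simp only [sum_walsh_mul_walsh, singleton_inj, mul_ite, mul_zero, sum_ite_eq, mem_univ,
          if_true]
        rw [← sum_mul, EuclideanSpace.norm_sq_eq, mul_comm]
        simp [sq]

lemma signVec_not (e : Fin d → Bool) : signVec (fun j => !e j) = -signVec e := by
  ext j
  simp [signVec_apply, boolSign_not]

lemma sum_signVec_flipAt (e : Fin d → Bool) :
    ∑ i, signVec (flipAt i e) = ((d : ℝ) - 2) • signVec e := by
  ext j
  have hterm : ∀ i, signVec (flipAt i e) j
      = boolSign (e j) - if j = i then 2 * boolSign (e j) else 0 := by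
    intro i
    split_ifs with h
    · simp only [signVec_apply, h, flipAt_apply, ↓reduceIte, boolSign_not]
      ring
    · simp [signVec_apply, flipAt_apply, h]
  simp only [WithLp.ofLp_sum, Finset.sum_apply, hterm, sum_sub_distrib, sum_const, card_univ,
    Fintype.card_fin, nsmul_eq_mul, sum_ite_eq, mem_univ, ↓reduceIte, PiLp.smul_apply,
    signVec_apply, smul_eq_mul]
  ring

lemma two_pow_mul_norm_le_sqrt_two_mul_sum_abs_inner_signVec (g : EuclideanSpace ℝ (Fin d)) :
    2 ^ d * ‖g‖ ≤ √2 * ∑ e, |⟪g, signVec e⟫_ℝ| := by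
  set r : (Fin d → Bool) → ℝ := fun e => |⟪g, signVec e⟫_ℝ|
  have hflip : ∀ e, ((Fintype.card (Fin d) : ℝ) - 2) * r e ≤ ∑ i, r (flipAt i e) := fun e =>
    calc ((Fintype.card (Fin d) : ℝ) - 2) * r e ≤ |((d : ℝ) - 2) * ⟪g, signVec e⟫_ℝ| := by
          rw [abs_mul, Fintype.card_fin]
          exact mul_le_mul_of_nonneg_right (le_abs_self _) (abs_nonneg _)
      _ = |∑ i, ⟪g, signVec (flipAt i e)⟫_ℝ| := by
          rw [← inner_sum, sum_signVec_flipAt, real_inner_smul_right]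
      _ ≤ ∑ i, r (flipAt i e) := abs_sum_le_sum_abs _ _
  have key := two_pow_mul_sum_sq_le_two_mul_sq_sum r (fun e => abs_nonneg _)
    (fun e => by simp only [r, signVec_not, inner_neg_right, abs_neg]) hflip
  simp only [r, sq_abs, sum_inner_signVec_sq, Fintype.card_fin] at key
  refine le_of_pow_le_pow_left₀ two_ne_zero (by positivity) ?_
  rw [mul_pow, mul_pow, Real.sq_sqrt zero_le_two]
  linarith

end Rademacher

section Descent

variable {E : Type*} [NormedAddCommGroup E] [InnerProductSpace ℝ E] [CompleteSpace E]

lemma hasDerivAt_comp_add_smul {f : E → ℝ} (hf : Differentiable ℝ f) (x h : E) (t : ℝ) :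
    HasDerivAt (fun t : ℝ => f (x + t • h)) ⟪gradient f (x + t • h), h⟫_ℝ t := by
  have hline : HasDerivAt (fun t : ℝ => x + t • h) h t := by
    simpa using ((hasDerivAt_id t).smul_const h).const_add x
  exact (hf _).hasGradientAt.hasFDerivAt.comp_hasDerivAt t hline

lemma apply_add_le_of_gradient_lipschitz {f : E → ℝ} {L : ℝ} (hf : Differentiable ℝ f)
    (hlip : ∀ x y, ‖gradient f x - gradient f y‖ ≤ L * ‖x - y‖) (x h : E) :
    f (x + h) ≤ f x + ⟪gradient f x, h⟫_ℝ + L / 2 * ‖h‖ ^ 2 := by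
  set φ : ℝ → ℝ :=
    fun t => f (x + t • h) - t * ⟪gradient f x, h⟫_ℝ - L / 2 * t ^ 2 * ‖h‖ ^ 2
  have hφ : ∀ t, HasDerivAt φ
      (⟪gradient f (x + t • h), h⟫_ℝ - ⟪gradient f x, h⟫_ℝ - L * t * ‖h‖ ^ 2) t := by
    intro t
    refine (((hasDerivAt_comp_add_smul hf x h t).sub
      ((hasDerivAt_id' t).mul_const ⟪gradient f x, h⟫_ℝ)).sub
      (((hasDerivAt_pow 2 t).const_mul (L / 2)).mul_const (‖h‖ ^ 2))).congr_deriv ?_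
    rw [Nat.add_one_sub_one, pow_one]
    push_cast
    ring
  have hanti : AntitoneOn φ (Set.Icc 0 1) := by
    refine antitoneOn_of_deriv_nonpos (convex_Icc 0 1)
      (fun t _ => (hφ t).continuousAt.continuousWithinAt)
      (fun t _ => (hφ t).differentiableAt.differentiableWithinAt) fun t ht => ?_
    rw [interior_Icc] at ht
    rw [(hφ t).deriv, ← inner_sub_left, sub_nonpos]
    calc ⟪gradient f (x + t • h) - gradient f x, h⟫_ℝ
        ≤ ‖gradient f (x + t • h) - gradient f x‖ * ‖h‖ := real_inner_le_norm _ _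
      _ ≤ L * ‖t • h‖ * ‖h‖ := by
          gcongr
          simpa using hlip (x + t • h) x
      _ = L * t * ‖h‖ ^ 2 := by
          rw [norm_smul, Real.norm_of_nonneg ht.1.le]
          ring
  have := hanti (Set.left_mem_Icc.2 zero_le_one) (Set.right_mem_Icc.2 zero_le_one) zero_le_one
  simp only [φ, one_smul, zero_smul, add_zero, one_mul, one_pow, mul_one, zero_mul, sub_zero,
    ne_eq, OfNat.ofNat_ne_zero, not_false_eq_true, zero_pow, mul_zero] at this
  linarith

lemma min_apply_add_apply_sub_le {f : E → ℝ} {L : ℝ} (hf : Differentiable ℝ f)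
    (hlip : ∀ x y, ‖gradient f x - gradient f y‖ ≤ L * ‖x - y‖) (x s : E) (α : ℝ) :
    min (f (x + α • s)) (f (x - α • s))
      ≤ f x - α * |⟪gradient f x, s⟫_ℝ| + L * α ^ 2 * ‖s‖ ^ 2 / 2 := by
  have hplus := apply_add_le_of_gradient_lipschitz hf hlip x (α • s)
  have hminus := apply_add_le_of_gradient_lipschitz hf hlip x (-(α • s))
  rw [← sub_eq_add_neg] at hminus
  simp only [inner_neg_right, inner_smul_right, norm_neg, norm_smul, Real.norm_eq_abs, mul_pow,
    sq_abs] at hplus hminus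
  rcases le_total 0 ⟪gradient f x, s⟫_ℝ with h | h
  · rw [abs_of_nonneg h]
    exact (min_le_right _ _).trans (by linarith)
  · rw [abs_of_nonpos h]
    exact (min_le_left _ _).trans (by linarith)

end Descent

theorem stmt2_general (d : ℕ) (f : EuclideanSpace ℝ (Fin d) → ℝ) (L : ℝ)
    (hdiff : Differentiable ℝ f)
    (hlip : ∀ x y : EuclideanSpace ℝ (Fin d),
      ‖gradient f x - gradient f y‖ ≤ L * ‖x - y‖)
    (x : EuclideanSpace ℝ (Fin d)) (α : ℝ) (hα : 0 ≤ α) :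
    (∑ e : Fin d → Bool, min (f (x + α • signVec e)) (f (x - α • signVec e))) / (2 : ℝ) ^ d
      ≤ f x - (α / Real.sqrt 2) * ‖gradient f x‖ + L * α ^ 2 * d / 2 := by
  set g := gradient f x
  set S := ∑ e : Fin d → Bool, |⟪g, signVec e⟫_ℝ|
  have hkhintchine : α / √2 * ‖g‖ * 2 ^ d ≤ α * S := by
    rw [div_mul_eq_mul_div, div_mul_eq_mul_div, div_le_iff₀ (by positivity)]
    nlinarith [mul_le_mul_of_nonneg_left
      (two_pow_mul_norm_le_sqrt_two_mul_sum_abs_inner_signVec g) hα]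
  rw [div_le_iff₀ (by positivity)]
  calc ∑ e, min (f (x + α • signVec e)) (f (x - α • signVec e))
      ≤ ∑ e : Fin d → Bool, (f x - α * |⟪g, signVec e⟫_ℝ| + L * α ^ 2 * d / 2) :=
        sum_le_sum fun e _ => by
          simpa only [norm_signVec_sq] using
            min_apply_add_apply_sub_le hdiff hlip x (signVec e) α
    _ = (f x + L * α ^ 2 * d / 2) * 2 ^ d - α * S := by
        simp only [S, sum_add_distrib, sum_sub_distrib, sum_const, card_univ, Fintype.card_pi,
          Fintype.card_bool, prod_const, Fintype.card_fin, nsmul_eq_mul, Nat.cast_pow,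
          Nat.cast_ofNat, mul_sum]
        ring
    _ ≤ (f x - α / √2 * ‖g‖ + L * α ^ 2 * d / 2) * 2 ^ d := by linarith

/-- one-step descent inequality for the S2P update under the
general (`L`-gradient-Lipschitz) smoothness assumption:
`E[min(f(x + αs), f(x − αs))] ≤ f(x) − (α/√2)‖∇f(x)‖ + L α² d / 2`,
the expectation being the uniform average over all `2^d` Rademacher vectors. -/
theorem stmt2 (d : ℕ) (hd : 1 ≤ d) (f : EuclideanSpace ℝ (Fin d) → ℝ) (L : ℝ) (hL : 0 < L)
    (hdiff : Differentiable ℝ f)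
    (hlip : ∀ x y : EuclideanSpace ℝ (Fin d),
      ‖gradient f x - gradient f y‖ ≤ L * ‖x - y‖)
    (x : EuclideanSpace ℝ (Fin d)) (α : ℝ) (hα : 0 ≤ α) :
    (∑ e : Fin d → Bool, min (f (x + α • signVec e)) (f (x - α • signVec e))) / (2 : ℝ) ^ d
      ≤ f x - (α / Real.sqrt 2) * ‖gradient f x‖ + L * α ^ 2 * d / 2 :=
  stmt2_general d f L hdiff hlip x α hα
end

section
/- Let d ≥ 1, let f : ℝ^d → ℝ be differentiable and L-gradient Lipschitz with L > 0, let x ∈ ℝ^d, let ρ > 0, and let s ∈ ℝ^d satisfy ‖s‖² = d. Then the dynamic step size α = |f(x + ρs) − f(x − ρs)|/(2ρLd) and the optimal step size α* = |⟨∇f(x), s⟩|/(Ld) satisfy |α − α*| ≤ ρ/2. -/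
/-!
Along the line `t ↦ f (x + t • s)` the derivative is `⟪∇f (x + t • s), s⟫`, which is
`L ‖s‖²`-Lipschitz in `t`. Hence the central difference `f (x + ρ s) - f (x - ρ s)` differs from
`2ρ ⟪∇f x, s⟫` by at most `L ρ² ‖s‖² = L ρ² d`; taking absolute values (a 1-Lipschitz operation)
and dividing by `2ρLd` gives the bound `ρ / 2`.
-/

open Set InnerProductSpace

theorem norm_central_difference_sub_le {E : Type*} [NormedAddCommGroup E] [NormedSpace ℝ E]
    {g g' : ℝ → E} {K ρ : ℝ} (hg : ∀ t, HasDerivAt g (g' t) t)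
    (hg' : ∀ t, ‖g' t - g' 0‖ ≤ K * |t|) (hρ : 0 ≤ ρ) :
    ‖g ρ - g (-ρ) - (2 * ρ) • g' 0‖ ≤ K * ρ ^ 2 := by
  set φ : ℝ → E := fun t => g t - g (-t) - (2 * t) • g' 0
  have hφ : ∀ t, HasDerivAt φ (g' t + g' (-t) - 2 • g' 0) t := by
    intro t
    have := ((hg t).sub ((hg (-t)).scomp t (hasDerivAt_neg t))).sub
      (((hasDerivAt_id t).const_mul 2).smul_const (g' 0))
    convert this using 1
    · ext; simp [φ]
    · simp [two_smul]
  have hφ' : ∀ t ∈ Ico 0 ρ, ‖g' t + g' (-t) - 2 • g' 0‖ ≤ 2 * K * t := by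
    intro t ht
    calc ‖g' t + g' (-t) - 2 • g' 0‖ = ‖(g' t - g' 0) + (g' (-t) - g' 0)‖ := by
          rw [two_smul]; abel_nf
      _ ≤ K * |t| + K * |-t| := norm_add_le_of_le (hg' t) (hg' (-t))
      _ = 2 * K * t := by rw [abs_neg, abs_of_nonneg ht.1]; ring
  have hB : ∀ t, HasDerivAt (fun t => K * t ^ 2) (2 * K * t) t := fun t =>
    ((hasDerivAt_pow 2 t).const_mul K).congr_deriv (by push_cast; ring)
  simpa [φ] using image_norm_le_of_norm_deriv_right_le_deriv_boundary
    (fun t _ => (hφ t).continuousAt.continuousWithinAt) (fun t _ => (hφ t).hasDerivWithinAt)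
    (by simp [φ]) hB hφ' ⟨hρ, le_rfl⟩

theorem abs_central_difference_sub_inner_gradient_le {E : Type*} [NormedAddCommGroup E]
    [InnerProductSpace ℝ E] [CompleteSpace E] {f : E → ℝ} {L : ℝ} (hf : Differentiable ℝ f)
    (hlip : ∀ x y, ‖gradient f x - gradient f y‖ ≤ L * ‖x - y‖) (x s : E) {ρ : ℝ}
    (hρ : 0 ≤ ρ) :
    |f (x + ρ • s) - f (x - ρ • s) - 2 * ρ * ⟪gradient f x, s⟫_ℝ| ≤ L * ρ ^ 2 * ‖s‖ ^ 2 := by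
  have hline : ∀ t : ℝ,
      HasDerivAt (fun t : ℝ => f (x + t • s)) ⟪gradient f (x + t • s), s⟫_ℝ t := fun t =>
    (hf _).hasGradientAt.hasFDerivAt.comp_hasDerivAt t
      ((((hasDerivAt_id t).smul_const s).const_add x).congr_deriv (one_smul ℝ s))
  have hline_lip : ∀ t : ℝ,
      ‖⟪gradient f (x + t • s), s⟫_ℝ - ⟪gradient f (x + (0 : ℝ) • s), s⟫_ℝ‖
        ≤ L * ‖s‖ ^ 2 * |t| := by
    intro t
    rw [← inner_sub_left, Real.norm_eq_abs]
    calc _ ≤ ‖gradient f (x + t • s) - gradient f (x + (0 : ℝ) • s)‖ * ‖s‖ :=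
          abs_real_inner_le_norm _ _
      _ ≤ L * ‖t • s‖ * ‖s‖ := by gcongr; simpa using hlip (x + t • s) x
      _ = L * ‖s‖ ^ 2 * |t| := by rw [norm_smul, Real.norm_eq_abs]; ring
  simpa [Real.norm_eq_abs, neg_smul, ← sub_eq_add_neg, mul_right_comm] using
    norm_central_difference_sub_le hline hline_lip hρ

theorem stmt5_general (d : ℕ) (f : EuclideanSpace ℝ (Fin d) → ℝ) (L : ℝ) (hL : 0 < L)
    (hdiff : Differentiable ℝ f)
    (hlip : ∀ x y : EuclideanSpace ℝ (Fin d),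
      ‖gradient f x - gradient f y‖ ≤ L * ‖x - y‖)
    (x : EuclideanSpace ℝ (Fin d)) (ρ : ℝ) (hρ : 0 < ρ)
    (s : EuclideanSpace ℝ (Fin d)) (hs : ‖s‖ ^ 2 = (d : ℝ)) :
    |(|f (x + ρ • s) - f (x - ρ • s)| / (2 * ρ * L * d))
        - (|(inner ℝ (gradient f x) s : ℝ)| / (L * d))|
      ≤ ρ / 2 := by
  set A := f (x + ρ • s) - f (x - ρ • s)
  set c := (inner ℝ (gradient f x) s : ℝ)
  have h2ρ : 0 < 2 * ρ := by positivity
  have hdev : |A - 2 * ρ * c| ≤ L * ρ ^ 2 * d := by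
    rw [← hs]; exact abs_central_difference_sub_inner_gradient_le hdiff hlip x s hρ.le
  have hdev_abs : |(|A| - 2 * ρ * |c|)| ≤ L * ρ ^ 2 * d := by
    rw [← abs_of_pos h2ρ, ← abs_mul]
    exact (abs_abs_sub_abs_le_abs_sub _ _).trans hdev
  have hD : 0 ≤ 2 * ρ * (L * d) := by positivity
  rw [show 2 * ρ * L * d = 2 * ρ * (L * d) by ring, ← mul_div_mul_left |c| (L * d) h2ρ.ne',
    ← sub_div, abs_div, abs_of_nonneg hD]
  exact div_le_of_le_mul₀ hD (by positivity) (hdev_abs.trans_eq (by ring))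

/-- for `s` with `‖s‖² = d`, the dynamic step size
`α = |f(x + ρs) − f(x − ρs)|/(2ρLd)` and the optimal step size
`α* = |⟨∇f(x), s⟩|/(Ld)` satisfy `|α − α*| ≤ ρ/2`. -/
theorem stmt5 (d : ℕ) (hd : 1 ≤ d) (f : EuclideanSpace ℝ (Fin d) → ℝ) (L : ℝ) (hL : 0 < L)
    (hdiff : Differentiable ℝ f)
    (hlip : ∀ x y : EuclideanSpace ℝ (Fin d),
      ‖gradient f x - gradient f y‖ ≤ L * ‖x - y‖)
    (x : EuclideanSpace ℝ (Fin d)) (ρ : ℝ) (hρ : 0 < ρ)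
    (s : EuclideanSpace ℝ (Fin d)) (hs : ‖s‖ ^ 2 = (d : ℝ)) :
    |(|f (x + ρ • s) - f (x - ρ • s)| / (2 * ρ * L * d))
        - (|(inner ℝ (gradient f x) s : ℝ)| / (L * d))|
      ≤ ρ / 2 :=
  stmt5_general d f L hL hdiff hlip x ρ hρ s hs
end

section
/- Let f : ℝ^d → ℝ be twice continuously differentiable and (L0, L1)-smooth with L0, L1 > 0, let c > 0, and set A(c) = 1 + e^c − (e^c − 1)/c and B(c) = (e^c − 1)/c. Then for all x, y ∈ ℝ^d with ‖y − x‖ ≤ c/L1, f(y) ≤ f(x) + ⟨∇f(x), y − x⟩ + ((A(c) L0 + B(c) L1 ‖∇f(x)‖)/2) ‖y − x‖². -/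
/-!
Write `v = y - x` and `K = L1 ‖v‖ ≤ c`. Along the segment `t ↦ x + t v` the Hessian bound makes
`u t = ‖∇f(x + t v) - ∇f x‖` satisfy `u' ≤ K u + (L0 + L1 ‖∇f x‖) ‖v‖` with `u 0 = 0`, so Grönwall gives
`u t ≤ (L0 + L1 ‖∇f x‖) ‖v‖ (e^{K t} - 1) / K`, and convexity of `exp` bounds `(e^{K t} - 1) / K` by
`B(c) t`. Comparing `f (x + t v) - t ⟨∇f x, v⟩` with a quadratic in `t` then yields the inequality with
`B(c) L0` in place of `A(c) L0`, and `B(c) ≤ A(c)` amounts to `2 (e^c - 1) ≤ c (1 + e^c)`.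
-/

open Real Set

namespace Real

lemma exp_sub_one_le_mul_div {c u : ℝ} (hc : 0 < c) (hu : 0 ≤ u) (huc : u ≤ c) :
    exp u - 1 ≤ u * ((exp c - 1) / c) := by
  rcases hu.eq_or_lt with rfl | hu
  · simp
  have h := convexOn_exp.secant_mono (mem_univ 0) (mem_univ u) (mem_univ c) hu.ne' hc.ne' huc
  simp only [exp_zero, sub_zero] at h
  rwa [div_le_iff₀' hu] at h

lemma two_mul_exp_sub_one_le {c : ℝ} (hc : 0 ≤ c) : 2 * (exp c - 1) ≤ c * (1 + exp c) := by
  have hderiv : ∀ t, HasDerivAt (fun t ↦ t * (1 + exp t) - 2 * (exp t - 1))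
      (1 - exp t * (1 - t)) t := fun t ↦ by
    refine (((hasDerivAt_id' t).mul ((hasDerivAt_exp t).const_add 1)).sub
      (((hasDerivAt_exp t).sub_const 1).const_mul 2)).congr_deriv ?_
    ring
  have hexp_mul_le_one : ∀ t, exp t * (1 - t) ≤ 1 := fun t ↦
    calc exp t * (1 - t) ≤ exp t * exp (-t) := by gcongr; linarith [add_one_le_exp (-t)]
      _ = 1 := by rw [← exp_add, add_neg_cancel, exp_zero]
  have hmono := monotone_of_hasDerivAt_nonneg hderiv (fun t ↦ sub_nonneg.2 (hexp_mul_le_one t)) hc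
  simp only [exp_zero] at hmono
  linarith

end Real

lemma gronwallBound_zero_le {K ε t c : ℝ} (hc : 0 < c) (hK : 0 ≤ K) (hε : 0 ≤ ε) (ht : 0 ≤ t)
    (hKt : K * t ≤ c) : gronwallBound 0 K ε t ≤ ε * ((exp c - 1) / c) * t := by
  rcases hK.eq_or_lt with rfl | hK
  · have : 1 ≤ (exp c - 1) / c := by
      rw [le_div_iff₀ hc]; linarith [add_one_le_exp c]
    simp only [gronwallBound_K0, zero_add]
    nlinarith [mul_nonneg hε ht]
  · simp only [gronwallBound_of_K_ne_0 hK.ne', zero_mul, zero_add]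
    calc ε / K * (exp (K * t) - 1)
        ≤ ε / K * (K * t * ((exp c - 1) / c)) := by
          gcongr
          exact exp_sub_one_le_mul_div hc (by positivity) hKt
      _ = ε * ((exp c - 1) / c) * t := by field_simp

section

variable {E F : Type*} [NormedAddCommGroup E] [NormedSpace ℝ E]
  [NormedAddCommGroup F] [NormedSpace ℝ F]

lemma hasDerivAt_comp_add_smul_s9 {g : E → F} {x v : E} {t : ℝ}
    (hg : DifferentiableAt ℝ g (x + t • v)) :
    HasDerivAt (fun s : ℝ ↦ g (x + s • v)) (fderiv ℝ g (x + t • v) v) t := by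
  have := hg.hasFDerivAt.comp_hasDerivAt t (((hasDerivAt_id t).smul_const v).const_add x)
  simp only [id, one_smul] at this
  exact this

lemma norm_sub_le_gronwallBound_of_norm_fderiv_le {g : E → F} {L0 L1 : ℝ}
    (hg : Differentiable ℝ g) (hL1 : 0 ≤ L1)
    (hbound : ∀ z, ‖fderiv ℝ g z‖ ≤ L0 + L1 * ‖g z‖) (x v : E) {t : ℝ} (ht : 0 ≤ t) :
    ‖g (x + t • v) - g x‖ ≤ gronwallBound 0 (L1 * ‖v‖) ((L0 + L1 * ‖g x‖) * ‖v‖) t := by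
  have hderiv (s : ℝ) : HasDerivAt (fun s ↦ g (x + s • v) - g x) (fderiv ℝ g (x + s • v) v) s :=
    (hasDerivAt_comp_add_smul_s9 (hg _)).sub_const (g x)
  have hderiv_le (s : ℝ) : ‖fderiv ℝ g (x + s • v) v‖
      ≤ L1 * ‖v‖ * ‖g (x + s • v) - g x‖ + (L0 + L1 * ‖g x‖) * ‖v‖ :=
    calc ‖fderiv ℝ g (x + s • v) v‖
        ≤ (L0 + L1 * ‖g (x + s • v)‖) * ‖v‖ :=
          (ContinuousLinearMap.le_opNorm _ _).trans (by gcongr; exact hbound _)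
      _ ≤ (L0 + L1 * (‖g (x + s • v) - g x‖ + ‖g x‖)) * ‖v‖ := by
          gcongr; exact norm_le_norm_sub_add _ _
      _ = L1 * ‖v‖ * ‖g (x + s • v) - g x‖ + (L0 + L1 * ‖g x‖) * ‖v‖ := by ring
  simpa using norm_le_gronwallBound_of_norm_deriv_right_le (a := 0) (b := t)
    (fun s _ ↦ (hderiv s).continuousAt.continuousWithinAt) (fun s _ ↦ (hderiv s).hasDerivWithinAt)
    (by simp) (fun s _ ↦ hderiv_le s) t (right_mem_Icc.2 ht)

lemma le_add_fderiv_add_of_norm_fderiv_sub_le {f : E → ℝ} (hf : Differentiable ℝ f) {x v : E}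
    {M : ℝ} (hM : ∀ t ∈ Icc (0 : ℝ) 1, ‖fderiv ℝ f (x + t • v) - fderiv ℝ f x‖ ≤ M * t) :
    f (x + v) ≤ f x + fderiv ℝ f x v + M * ‖v‖ / 2 := by
  have hderiv (t : ℝ) := hasDerivAt_comp_add_smul_s9 (v := v) (hf (x + t • v))
  have hbdry (t : ℝ) : HasDerivAt (fun t ↦ f x + t * fderiv ℝ f x v + M * ‖v‖ * t ^ 2 / 2)
      (fderiv ℝ f x v + M * ‖v‖ * t) t := by
    refine ((((hasDerivAt_id' t).mul_const (fderiv ℝ f x v)).const_add (f x)).add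
      (((hasDerivAt_pow 2 t).const_mul (M * ‖v‖)).div_const 2)).congr_deriv ?_
    ring
  have hderiv_le : ∀ t ∈ Ico (0 : ℝ) 1, fderiv ℝ f (x + t • v) v ≤ fderiv ℝ f x v + M * ‖v‖ * t :=
    fun t ht ↦
    calc fderiv ℝ f (x + t • v) v
        = fderiv ℝ f x v + (fderiv ℝ f (x + t • v) - fderiv ℝ f x) v := by simp
      _ ≤ fderiv ℝ f x v + M * t * ‖v‖ := by
          gcongr
          exact (le_abs_self _).trans <|
            ContinuousLinearMap.le_of_opNorm_le _ (hM t (Ico_subset_Icc_self ht)) v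
      _ = fderiv ℝ f x v + M * ‖v‖ * t := by ring
  simpa using image_le_of_deriv_right_le_deriv_boundary (a := 0) (b := 1)
    (fun t _ ↦ (hderiv t).continuousAt.continuousWithinAt) (fun t _ ↦ (hderiv t).hasDerivWithinAt)
    (by simp) (fun t _ ↦ (hbdry t).continuousAt.continuousWithinAt)
    (fun t _ ↦ (hbdry t).hasDerivWithinAt) hderiv_le (right_mem_Icc.2 zero_le_one)

theorem le_add_fderiv_add_of_norm_fderiv_fderiv_le {f : E → ℝ} {L0 L1 c : ℝ}
    (hf : Differentiable ℝ f) (hf' : Differentiable ℝ (fderiv ℝ f)) (hL1 : 0 ≤ L1) (hc : 0 < c)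
    (hsmooth : ∀ z, ‖fderiv ℝ (fderiv ℝ f) z‖ ≤ L0 + L1 * ‖fderiv ℝ f z‖)
    {x v : E} (hv : L1 * ‖v‖ ≤ c) :
    f (x + v) ≤ f x + fderiv ℝ f x v
      + (L0 + L1 * ‖fderiv ℝ f x‖) * ((exp c - 1) / c) / 2 * ‖v‖ ^ 2 := by
  have hε : 0 ≤ (L0 + L1 * ‖fderiv ℝ f x‖) * ‖v‖ :=
    mul_nonneg ((norm_nonneg (fderiv ℝ (fderiv ℝ f) x)).trans (hsmooth x)) (norm_nonneg v)
  have h := le_add_fderiv_add_of_norm_fderiv_sub_le hf fun t ht ↦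
    (norm_sub_le_gronwallBound_of_norm_fderiv_le hf' hL1 hsmooth x v ht.1).trans <|
      gronwallBound_zero_le hc (by positivity) hε ht.1 <|
        (mul_le_of_le_one_right (by positivity) ht.2).trans hv
  convert h using 2; ring

end

/-- descent inequality under relaxed `(L0, L1)`-smoothness,
Lemma C.1: with `A(c) = 1 + e^c − (e^c − 1)/c` and `B(c) = (e^c − 1)/c`, for
all `x, y` with `‖y − x‖ ≤ c/L1`,
`f(y) ≤ f(x) + ⟨∇f(x), y − x⟩ + ((A(c)L0 + B(c)L1‖∇f(x)‖)/2)‖y − x‖²`. -/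
theorem stmt9 {d : ℕ} (f : EuclideanSpace ℝ (Fin d) → ℝ)
    (L0 L1 : ℝ) (hL0 : 0 < L0) (hL1 : 0 < L1)
    (hf : ContDiff ℝ 2 f)
    (hsmooth : ∀ x : EuclideanSpace ℝ (Fin d),
      ‖iteratedFDeriv ℝ 2 f x‖ ≤ L0 + L1 * ‖gradient f x‖)
    (c : ℝ) (hc : 0 < c) :
    ∀ x y : EuclideanSpace ℝ (Fin d), ‖y - x‖ ≤ c / L1 →
      f y ≤ f x + (inner ℝ (gradient f x) (y - x) : ℝ) +
        (((1 + Real.exp c - (Real.exp c - 1) / c) * L0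
            + ((Real.exp c - 1) / c) * L1 * ‖gradient f x‖) / 2) * ‖y - x‖ ^ 2 := by
  intro x y hxy
  have norm_gradient (z) : ‖gradient f z‖ = ‖fderiv ℝ f z‖ :=
    (InnerProductSpace.toDual ℝ _).symm.norm_map _
  have hHess (z) : ‖fderiv ℝ (fderiv ℝ f) z‖ ≤ L0 + L1 * ‖fderiv ℝ f z‖ := by
    rw [← norm_iteratedFDeriv_one (𝕜 := ℝ), norm_iteratedFDeriv_fderiv, ← norm_gradient]
    exact hsmooth z
  have h := le_add_fderiv_add_of_norm_fderiv_fderiv_le (x := x) (v := y - x)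
    (hf.differentiable (by norm_num))
    ((hf.fderiv_right (m := 1) le_rfl).differentiable one_ne_zero) hL1.le hc hHess
    ((le_div_iff₀' hL1).1 hxy)
  rw [add_sub_cancel] at h
  rw [inner_gradient_left, norm_gradient]
  have hBA : (exp c - 1) / c ≤ 1 + exp c - (exp c - 1) / c := by
    rw [le_sub_iff_add_le, ← two_mul, mul_div_assoc', div_le_iff₀ hc]
    linarith [two_mul_exp_sub_one_le hc.le]
  refine h.trans ?_
  gcongr f x + fderiv ℝ f x (y - x) + ?_ / 2 * ‖y - x‖ ^ 2
  nlinarith [mul_le_mul_of_nonneg_left hBA hL0.le]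
end

section
/- Let d ≥ 1 be an integer, f⋆ ∈ ℝ, K ≥ 1 an integer, and let A, B, L0, L1 > 0 satisfy √2 B L1 < 1. Let θ : ℕ → ℝ, g : ℕ → ℝ, and δ : ℕ → ℝ be sequences such that for all k: θ_k ≥ f⋆, 0 ≤ g_k ≤ A L0/(1 − √2 B L1), |δ_k| ≤ g_k/(2 (A L0 + √2 B L1 g_k) d), and for all k < K, θ_{k+1} ≤ θ_k − g_k²/(4 (A L0 + √2 B L1 g_k) d) + ((A L0 + √2 B L1 g_k) d/2) δ_k². Then there exists j with 0 ≤ j < K such that g_j² ≤ 8 A L0 d (θ_0 − f⋆)/((1 − √2 B L1) K). -/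
/-!
With `c_k = A L0 + √2 B L1 g_k`, the bound on `δ_k` makes the error term at most half of the
decrease term, so `θ_k - θ_{k+1} ≥ g_k² / (8 c_k d)`. The bound on `g_k` gives
`c_k ≤ A L0 / (1 - √2 B L1)`, so each step decreases `θ` by at least a fixed multiple of `g_k²`.
Summing over `k < K` telescopes to `θ_0 - θ_K ≤ θ_0 - f⋆`, and the smallest `g_j²` is at most
the average.
-/

open Finset

theorem sq_le_mul_sub_of_inexact_descent {D g δ θ θ' : ℝ} (hD : 0 < D)
    (hδ : |δ| ≤ g / (2 * D))
    (hstep : θ' ≤ θ - g ^ 2 / (4 * D) + D / 2 * δ ^ 2) :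
    g ^ 2 ≤ 8 * D * (θ - θ') := by
  have hδsq : δ ^ 2 ≤ (g / (2 * D)) ^ 2 := by
    simpa only [sq_abs] using pow_le_pow_left₀ (abs_nonneg δ) hδ 2
  have herror : D / 2 * δ ^ 2 ≤ g ^ 2 / (8 * D) :=
    calc D / 2 * δ ^ 2 ≤ D / 2 * (g / (2 * D)) ^ 2 := by gcongr
      _ = g ^ 2 / (8 * D) := by field_simp; ring
  have hdecrease : g ^ 2 / (8 * D) ≤ θ - θ' := by
    have : g ^ 2 / (4 * D) = 2 * (g ^ 2 / (8 * D)) := by field_simp; ring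
    linarith
  rwa [div_le_iff₀' (by positivity)] at hdecrease

theorem add_mul_le_div_one_sub {a s x : ℝ} (hs₀ : 0 ≤ s) (hs₁ : s < 1)
    (hx : x ≤ a / (1 - s)) : a + s * x ≤ a / (1 - s) :=
  calc a + s * x ≤ a + s * (a / (1 - s)) := by gcongr
    _ = a / (1 - s) := by field_simp [(sub_pos.mpr hs₁).ne']; ring

theorem exists_le_mul_div_of_le_mul_sub {θ a : ℕ → ℝ} {C m : ℝ} {K : ℕ} (hK : 0 < K) (hC : 0 ≤ C)
    (hm : m ≤ θ K) (hstep : ∀ k < K, a k ≤ C * (θ k - θ (k + 1))) :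
    ∃ j < K, a j ≤ C * (θ 0 - m) / K := by
  have hsum : ∑ k ∈ range K, a k ≤ ∑ _k ∈ range K, C * (θ 0 - m) / K := by
    have htelescope : ∑ k ∈ range K, C * (θ k - θ (k + 1)) = C * (θ 0 - θ K) := by
      rw [← mul_sum, sum_range_sub']
    calc ∑ k ∈ range K, a k ≤ ∑ k ∈ range K, C * (θ k - θ (k + 1)) :=
          sum_le_sum fun k hk ↦ hstep k (mem_range.mp hk)
      _ = C * (θ 0 - θ K) := htelescope
      _ ≤ C * (θ 0 - m) := by gcongr
      _ = ∑ _k ∈ range K, C * (θ 0 - m) / K := by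
          rw [sum_const, card_range, nsmul_eq_mul]; field_simp
  obtain ⟨j, hj, hle⟩ := exists_le_of_sum_le (nonempty_range_iff.mpr hK.ne') hsum
  exact ⟨j, mem_range.mp hj, hle⟩

/-- Theorem 3.5, Option 4, Condition 2 of Table 1:
the case `√2 B L1 < 1` and `g_k ≤ A L0/(1 − √2 B L1)`. -/
theorem stmt16 (d : ℕ) (hd : 1 ≤ d) (fstar : ℝ) (K : ℕ) (hK : 1 ≤ K)
    (A B L0 L1 : ℝ) (hA : 0 < A) (hB : 0 < B) (hL0 : 0 < L0) (hL1 : 0 < L1)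
    (hsmall : Real.sqrt 2 * B * L1 < 1)
    (θ g δ : ℕ → ℝ)
    (hθ : ∀ k, fstar ≤ θ k)
    (hg0 : ∀ k, 0 ≤ g k)
    (hg1 : ∀ k, g k ≤ A * L0 / (1 - Real.sqrt 2 * B * L1))
    (hδ : ∀ k, |δ k| ≤ g k / (2 * (A * L0 + Real.sqrt 2 * B * L1 * g k) * d))
    (hstep : ∀ k < K,
      θ (k + 1) ≤ θ k - (g k) ^ 2 / (4 * (A * L0 + Real.sqrt 2 * B * L1 * g k) * d)
        + ((A * L0 + Real.sqrt 2 * B * L1 * g k) * d / 2) * (δ k) ^ 2) :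
    ∃ j < K, (g j) ^ 2 ≤ 8 * A * L0 * d * (θ 0 - fstar) / ((1 - Real.sqrt 2 * B * L1) * K) := by
  set s := Real.sqrt 2 * B * L1
  have hs₀ : 0 ≤ s := by positivity
  have hd₀ : (0 : ℝ) < d := by exact_mod_cast hd
  have hdescent : ∀ k < K, g k ^ 2 ≤ 8 * A * L0 * d / (1 - s) * (θ k - θ (k + 1)) := by
    intro k hk
    have hD : 0 < (A * L0 + s * g k) * d := by have := hg0 k; positivity
    have hsq := sq_le_mul_sub_of_inexact_descent hD (by simpa only [mul_assoc] using hδ k)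
      (by simpa only [mul_assoc] using hstep k hk)
    have hdiff : 0 ≤ θ k - θ (k + 1) :=
      nonneg_of_mul_nonneg_right ((sq_nonneg _).trans hsq) (by positivity)
    calc g k ^ 2 ≤ 8 * ((A * L0 + s * g k) * d) * (θ k - θ (k + 1)) := hsq
      _ ≤ 8 * (A * L0 / (1 - s) * d) * (θ k - θ (k + 1)) := by
          gcongr; exact add_mul_le_div_one_sub hs₀ hsmall (hg1 k)
      _ = 8 * A * L0 * d / (1 - s) * (θ k - θ (k + 1)) := by ring
  obtain ⟨j, hj, hle⟩ := exists_le_mul_div_of_le_mul_sub hK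
    (by have := sub_pos.mpr hsmall; positivity) (hθ K) hdescent
  rw [div_mul_eq_mul_div, div_div] at hle
  exact ⟨j, hj, hle⟩
end

section
/- Let d ≥ 1 be an integer, f⋆ ∈ ℝ, K ≥ 1 an integer, and let A, B, L0, L1 > 0 satisfy √2 B L1 > 1. Let θ : ℕ → ℝ, g : ℕ → ℝ, and δ : ℕ → ℝ be sequences such that for all k: θ_k ≥ f⋆, 0 ≤ g_k ≤ A L0/(√2 B L1 − 1), |δ_k| ≤ g_k/(2 (A L0 + √2 B L1 g_k) d), and for all k < K, θ_{k+1} ≤ θ_k − g_k²/(4 (A L0 + √2 B L1 g_k) d) + ((A L0 + √2 B L1 g_k) d/2) δ_k². Then there exists j with 0 ≤ j < K such that g_j² ≤ 8 A L0 d (θ_0 − f⋆)(2√2 B L1 − 1)/((√2 B L1 − 1) K). -/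
/-!
Write `c = √2 B L1` and `D_k = A L0 + c g_k`. The bound on `|δ_k|` makes the error term at most
half of the decrease term, so `θ_{k+1} ≤ θ_k - g_k² / (8 D_k d)`; and `g_k ≤ A L0 / (c - 1)` gives
`D_k ≤ A L0 (2c - 1) / (c - 1)`, a bound independent of `k`. Telescoping over `k < K` and using
`θ_K ≥ f⋆` bounds the sum of the `g_k²`, hence their minimum.
-/

open Finset

section OrderedField

variable {𝕜 : Type*} [Field 𝕜] [LinearOrder 𝕜] [IsStrictOrderedRing 𝕜]

theorem sum_range_le_sub_of_le_sub {θ a : ℕ → 𝕜} {K : ℕ}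
    (h : ∀ k < K, θ (k + 1) ≤ θ k - a k) :
    ∑ k ∈ range K, a k ≤ θ 0 - θ K := by
  rw [← sum_range_sub' θ K]
  exact sum_le_sum fun k hk => by linarith [h k (mem_range.mp hk)]

theorem exists_lt_le_div_of_sum_range_le {a : ℕ → 𝕜} {K : ℕ} {S : 𝕜} (hK : 0 < K)
    (h : ∑ k ∈ range K, a k ≤ S) :
    ∃ j < K, a j ≤ S / K := by
  have hS : ∑ k ∈ range K, a k ≤ ∑ _k ∈ range K, S / K := by
    rw [sum_const, card_range, nsmul_eq_mul, mul_div_cancel₀ _ (by positivity)]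
    exact h
  obtain ⟨j, hj, hle⟩ := exists_le_of_sum_le (nonempty_range_iff.mpr hK.ne') hS
  exact ⟨j, mem_range.mp hj, hle⟩

theorem half_mul_sq_le_of_abs_le_div {M g δ : 𝕜} (hM : 0 < M) (hδ : |δ| ≤ g / (2 * M)) :
    M / 2 * δ ^ 2 ≤ g ^ 2 / (8 * M) := by
  have hδ2 : δ ^ 2 ≤ (g / (2 * M)) ^ 2 := by
    rw [← sq_abs]
    exact pow_le_pow_left₀ (abs_nonneg δ) hδ 2
  calc M / 2 * δ ^ 2 ≤ M / 2 * (g / (2 * M)) ^ 2 := by gcongr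
    _ = g ^ 2 / (8 * M) := by field_simp; ring

theorem le_sub_sq_div_of_le_sub_add {M g δ θ θ' : 𝕜} (hM : 0 < M) (hδ : |δ| ≤ g / (2 * M))
    (hstep : θ' ≤ θ - g ^ 2 / (4 * M) + M / 2 * δ ^ 2) :
    θ' ≤ θ - g ^ 2 / (8 * M) := by
  have hhalf : g ^ 2 / (4 * M) = 2 * (g ^ 2 / (8 * M)) := by field_simp; ring
  linarith [half_mul_sq_le_of_abs_le_div hM hδ]

theorem add_mul_le_of_le_div_sub_one {a c g : 𝕜} (hc : 1 < c) (hg : g ≤ a / (c - 1)) :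
    a + c * g ≤ a * (2 * c - 1) / (c - 1) := by
  have hc1 : 0 < c - 1 := sub_pos.mpr hc
  rw [le_div_iff₀ hc1] at hg ⊢
  nlinarith

theorem le_sub_sq_div_of_le_div_sub_one {a c d g δ θ θ' : 𝕜} (ha : 0 < a) (hc : 1 < c)
    (hd : 0 < d) (hg0 : 0 ≤ g) (hg1 : g ≤ a / (c - 1))
    (hδ : |δ| ≤ g / (2 * (a + c * g) * d))
    (hstep : θ' ≤ θ - g ^ 2 / (4 * (a + c * g) * d) + ((a + c * g) * d / 2) * δ ^ 2) :
    θ' ≤ θ - g ^ 2 * (c - 1) / (8 * a * d * (2 * c - 1)) := by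
  have hD : 0 < a + c * g := by nlinarith
  simp only [mul_assoc] at hδ hstep
  have hdesc := le_sub_sq_div_of_le_sub_add (mul_pos hD hd) hδ hstep
  have hc1 : 0 < c - 1 := sub_pos.mpr hc
  have hbound : g ^ 2 * (c - 1) / (8 * a * d * (2 * c - 1)) ≤ g ^ 2 / (8 * ((a + c * g) * d)) :=
    calc g ^ 2 * (c - 1) / (8 * a * d * (2 * c - 1))
        = g ^ 2 / (8 * (a * (2 * c - 1) / (c - 1) * d)) := by field_simp
      _ ≤ g ^ 2 / (8 * ((a + c * g) * d)) := by
        gcongr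
        exact add_mul_le_of_le_div_sub_one hc hg1
  linarith

end OrderedField

theorem stmt17_general (d : ℕ) (hd : 1 ≤ d) (fstar : ℝ) (K : ℕ) (hK : 1 ≤ K)
    (A B L0 L1 : ℝ) (hA : 0 < A) (hL0 : 0 < L0)
    (hbig : 1 < Real.sqrt 2 * B * L1)
    (θ g δ : ℕ → ℝ)
    (hθ : ∀ k, fstar ≤ θ k)
    (hg0 : ∀ k, 0 ≤ g k)
    (hg1 : ∀ k, g k ≤ A * L0 / (Real.sqrt 2 * B * L1 - 1))
    (hδ : ∀ k, |δ k| ≤ g k / (2 * (A * L0 + Real.sqrt 2 * B * L1 * g k) * d))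
    (hstep : ∀ k < K,
      θ (k + 1) ≤ θ k - (g k) ^ 2 / (4 * (A * L0 + Real.sqrt 2 * B * L1 * g k) * d)
        + ((A * L0 + Real.sqrt 2 * B * L1 * g k) * d / 2) * (δ k) ^ 2) :
    ∃ j < K, (g j) ^ 2
      ≤ 8 * A * L0 * d * (θ 0 - fstar) * (2 * Real.sqrt 2 * B * L1 - 1)
          / ((Real.sqrt 2 * B * L1 - 1) * K) := by
  set c := Real.sqrt 2 * B * L1
  have hd' : (0 : ℝ) < d := by exact_mod_cast hd
  have hK' : (0 : ℝ) < K := by exact_mod_cast hK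
  have hc1 : 0 < c - 1 := sub_pos.mpr hbig
  have hdesc : ∀ k < K, θ (k + 1) ≤ θ k - g k ^ 2 * (c - 1) / (8 * (A * L0) * d * (2 * c - 1)) :=
    fun k hk => le_sub_sq_div_of_le_div_sub_one (mul_pos hA hL0) hbig hd' (hg0 k) (hg1 k) (hδ k)
      (hstep k hk)
  have hsum := (sum_range_le_sub_of_le_sub hdesc).trans (sub_le_sub_left (hθ K) (θ 0))
  obtain ⟨j, hj, hle⟩ := exists_lt_le_div_of_sum_range_le hK hsum
  refine ⟨j, hj, ?_⟩
  have h2c : 2 * Real.sqrt 2 * B * L1 - 1 = 2 * c - 1 := by ring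
  have h2c1 : 0 < 2 * c - 1 := by linarith
  rw [h2c, le_div_iff₀ (by positivity)]
  rw [div_le_div_iff₀ (by positivity) hK'] at hle
  linear_combination hle

/-- Theorem 3.5, Option 4, Condition 3 of Table 1:
the case `√2 B L1 > 1` and `g_k ≤ A L0/(√2 B L1 − 1)`. -/
theorem stmt17 (d : ℕ) (hd : 1 ≤ d) (fstar : ℝ) (K : ℕ) (hK : 1 ≤ K)
    (A B L0 L1 : ℝ) (hA : 0 < A) (hB : 0 < B) (hL0 : 0 < L0) (hL1 : 0 < L1)
    (hbig : 1 < Real.sqrt 2 * B * L1)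
    (θ g δ : ℕ → ℝ)
    (hθ : ∀ k, fstar ≤ θ k)
    (hg0 : ∀ k, 0 ≤ g k)
    (hg1 : ∀ k, g k ≤ A * L0 / (Real.sqrt 2 * B * L1 - 1))
    (hδ : ∀ k, |δ k| ≤ g k / (2 * (A * L0 + Real.sqrt 2 * B * L1 * g k) * d))
    (hstep : ∀ k < K,
      θ (k + 1) ≤ θ k - (g k) ^ 2 / (4 * (A * L0 + Real.sqrt 2 * B * L1 * g k) * d)
        + ((A * L0 + Real.sqrt 2 * B * L1 * g k) * d / 2) * (δ k) ^ 2) :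
    ∃ j < K, (g j) ^ 2
      ≤ 8 * A * L0 * d * (θ 0 - fstar) * (2 * Real.sqrt 2 * B * L1 - 1)
          / ((Real.sqrt 2 * B * L1 - 1) * K) :=
  stmt17_general d hd fstar K hK A B L0 L1 hA hL0 hbig θ g δ hθ hg0 hg1 hδ hstep
end

section
/- Let d ≥ 1 be an integer, K ≥ 1 an integer, and let A, B, L0, L1 > 0 satisfy √2 B L1 > 1. Let θ : ℕ → ℝ, g : ℕ → ℝ, and δ : ℕ → ℝ be sequences such that for all k: g_k ≥ A L0/(√2 B L1 − 1), |δ_k| ≤ g_k/(2 (A L0 + √2 B L1 g_k) d), and for all k < K, θ_{k+1} ≤ θ_k − g_k²/(4 (A L0 + √2 B L1 g_k) d) + ((A L0 + √2 B L1 g_k) d/2) δ_k². Then θ_K ≤ θ_0 − K · A L0/(8 (2√2 B L1 − 1)(√2 B L1 − 1) d). -/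
/-!
Write `s = √2 B L1` and `a = A L0`, so the step-size constant is `C_k = a + s g_k`.
The bound on `δ_k` makes the error term at most half of the guaranteed decrease
`g_k² / (4 C_k d)`. In the regime `g_k ≥ a / (s - 1)` we have `C_k ≤ (2s - 1) g_k`, so the
remaining decrease `g_k² / (8 C_k d)` is at least `g_k / (8 (2s - 1) d)`, which is at least the
constant `a / (8 (2s - 1)(s - 1) d)`; summing over `K` iterations gives the claim.
-/

lemma half_mul_sq_le_of_abs_le {c g δ : ℝ} (hc : 0 ≤ c) (hδ : |δ| ≤ g / (2 * c)) :
    c / 2 * δ ^ 2 ≤ g ^ 2 / (8 * c) := by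
  have hsq : δ ^ 2 ≤ (g / (2 * c)) ^ 2 := by
    simpa only [sq_abs] using pow_le_pow_left₀ (abs_nonneg δ) hδ 2
  calc c / 2 * δ ^ 2 ≤ c / 2 * (g / (2 * c)) ^ 2 := by gcongr
    _ = g ^ 2 / (8 * c) := by
      rcases hc.eq_or_lt with rfl | hc
      · simp
      · field_simp
        ring

lemma le_sub_sq_div_of_abs_le {c g δ θ θ' : ℝ} (hc : 0 ≤ c) (hδ : |δ| ≤ g / (2 * c))
    (hstep : θ' ≤ θ - g ^ 2 / (4 * c) + c / 2 * δ ^ 2) :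
    θ' ≤ θ - g ^ 2 / (8 * c) := by
  have hsplit : g ^ 2 / (4 * c) = 2 * (g ^ 2 / (8 * c)) := by ring
  linarith [half_mul_sq_le_of_abs_le hc hδ]

lemma div_le_sq_div_of_div_le {a s g : ℝ} (ha : 0 < a) (hs : 1 < s) (hg : a / (s - 1) ≤ g) :
    a / ((2 * s - 1) * (s - 1)) ≤ g ^ 2 / (a + s * g) := by
  have hg0 : 0 < g := (div_pos ha (by linarith)).trans_le hg
  have ha_le : a ≤ (s - 1) * g := by
    rwa [div_le_iff₀ (by linarith), mul_comm] at hg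
  calc a / ((2 * s - 1) * (s - 1)) = a / (s - 1) / (2 * s - 1) := by
        rw [mul_comm, div_div]
    _ ≤ g / (2 * s - 1) := by gcongr; linarith
    _ = g ^ 2 / ((2 * s - 1) * g) := by field_simp
    _ ≤ g ^ 2 / (a + s * g) := by
        gcongr
        linarith

lemma le_sub_natCast_mul_of_forall_lt {u : ℕ → ℝ} {c : ℝ} {K : ℕ}
    (h : ∀ k < K, u (k + 1) ≤ u k - c) : u K ≤ u 0 - K * c := by
  induction K with
  | zero => simp
  | succ K ih =>
    have hK := h K K.lt_succ_self
    have := ih fun k hk => h k (hk.trans K.lt_succ_self)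
    push_cast
    linarith

theorem stmt18_general (d : ℕ) (K : ℕ)
    (A B L0 L1 : ℝ) (hA : 0 < A) (hL0 : 0 < L0)
    (hbig : 1 < Real.sqrt 2 * B * L1)
    (θ g δ : ℕ → ℝ)
    (hg : ∀ k, A * L0 / (Real.sqrt 2 * B * L1 - 1) ≤ g k)
    (hδ : ∀ k, |δ k| ≤ g k / (2 * (A * L0 + Real.sqrt 2 * B * L1 * g k) * d))
    (hstep : ∀ k < K,
      θ (k + 1) ≤ θ k - (g k) ^ 2 / (4 * (A * L0 + Real.sqrt 2 * B * L1 * g k) * d)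
        + ((A * L0 + Real.sqrt 2 * B * L1 * g k) * d / 2) * (δ k) ^ 2) :
    θ K ≤ θ 0 - K * (A * L0
        / (8 * (2 * Real.sqrt 2 * B * L1 - 1) * (Real.sqrt 2 * B * L1 - 1) * d)) := by
  set s := Real.sqrt 2 * B * L1
  set a := A * L0
  have ha : 0 < a := mul_pos hA hL0
  rw [show 2 * Real.sqrt 2 * B * L1 = 2 * s by ring]
  refine le_sub_natCast_mul_of_forall_lt fun k hk => ?_
  have hg0 : 0 ≤ g k := (div_pos ha (by linarith)).le.trans (hg k)
  have hC : 0 ≤ (a + s * g k) * d := by positivity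
  have hdecrease : θ (k + 1) ≤ θ k - g k ^ 2 / (8 * ((a + s * g k) * d)) :=
    le_sub_sq_div_of_abs_le hC (by simpa only [mul_assoc] using hδ k)
      (by simpa only [mul_assoc] using hstep k hk)
  have hconst : a / (8 * (2 * s - 1) * (s - 1) * d) ≤ g k ^ 2 / (8 * ((a + s * g k) * d)) := by
    calc a / (8 * (2 * s - 1) * (s - 1) * d) = a / ((2 * s - 1) * (s - 1)) / (8 * d) := by
          rw [div_div]; ring_nf
      _ ≤ g k ^ 2 / (a + s * g k) / (8 * d) := by
          gcongr ?_ / _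
          exact div_le_sq_div_of_div_le ha hbig (hg k)
      _ = g k ^ 2 / (8 * ((a + s * g k) * d)) := by rw [div_div]; ring_nf
  linarith

/-- Theorem 3.5, Option 4, Condition 4 of Table 1:
the case `√2 B L1 > 1` and `g_k ≥ A L0/(√2 B L1 − 1)`: the objective value
decreases by a fixed amount per iteration. -/
theorem stmt18 (d : ℕ) (hd : 1 ≤ d) (K : ℕ) (hK : 1 ≤ K)
    (A B L0 L1 : ℝ) (hA : 0 < A) (hB : 0 < B) (hL0 : 0 < L0) (hL1 : 0 < L1)
    (hbig : 1 < Real.sqrt 2 * B * L1)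
    (θ g δ : ℕ → ℝ)
    (hg : ∀ k, A * L0 / (Real.sqrt 2 * B * L1 - 1) ≤ g k)
    (hδ : ∀ k, |δ k| ≤ g k / (2 * (A * L0 + Real.sqrt 2 * B * L1 * g k) * d))
    (hstep : ∀ k < K,
      θ (k + 1) ≤ θ k - (g k) ^ 2 / (4 * (A * L0 + Real.sqrt 2 * B * L1 * g k) * d)
        + ((A * L0 + Real.sqrt 2 * B * L1 * g k) * d / 2) * (δ k) ^ 2) :
    θ K ≤ θ 0 - K * (A * L0
        / (8 * (2 * Real.sqrt 2 * B * L1 - 1) * (Real.sqrt 2 * B * L1 - 1) * d)) :=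
  stmt18_general d K A B L0 L1 hA hL0 hbig θ g δ hg hδ hstep
end
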